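/- Let μ be an atomless Borel measure on ℝⁿ with μ(ℝⁿ) = ∞ and μ(𝔹) < ∞ for every open ball 𝔹 ⊆ ℝⁿ. Then there exists a constant D = D(n) > 1 such that for every positive integer j, there exists an open ball 𝔹 ⊆ ℝⁿ satisfying j ≤ μ(2𝔹) ≤ D μ(𝔹), where 2𝔹 is the concentric ball of twice the radius. -/

import Mathlib

open MeasureTheory Metric Filter Topology
open scoped ENNReal

/-!
Fix the mass `t` and let `ρ y` be the critical radius at which balls centred at `y` reach mass
`t`. Since `μ` has no atoms and is finite on balls, `ρ` is locally bounded below by positive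
constants, and a halving argument in the complete space yields a point `y` with `ρ ≥ ρ y / 2` on
`B(y, 20 ρ y)`. Near `y`, balls of radius below `ρ y / 2` carry mass `< t`, so covering
`B(z, 2 ρ z)` by `N` of them gives `μ(B(z, 2 ρ z)) ≤ N t`; and pigeonholing the mass `t` of
`B(y, 2 ρ y)` among `N` small balls gives a centre `z` near `y` with `t ≤ N μ(B(z, ρ z))`. Hence
`B(z, ρ z)` works with `D = N²`, where `N` depends only on the dimension.
-/

-- The ratio `40` is large enough for both pigeonhole steps of the hunting argument.
def HasBallCovering (X : Type*) [PseudoMetricSpace X] (N : ℕ) : Prop :=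
  ∀ (a : X) (r : ℝ), 0 < r → ∃ F : Finset X, F.card ≤ N ∧ (∀ p ∈ F, dist p a ≤ 40 * r) ∧
    closedBall a (40 * r) ⊆ ⋃ p ∈ F, ball p r

theorem exists_hasBallCovering (E : Type*) [NormedAddCommGroup E] [NormedSpace ℝ E]
    [ProperSpace E] : ∃ N, HasBallCovering E N := by
  classical
  obtain ⟨F, hF, hcov⟩ := (isCompact_closedBall (0 : E) 40).elim_nhds_subcover
    (fun x => ball x 1) (fun x _ => ball_mem_nhds x one_pos)
  refine ⟨F.card, fun a r hr => ⟨F.image (fun p => a + r • p), Finset.card_image_le, ?_, ?_⟩⟩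
  · simp only [Finset.mem_image, forall_exists_index, and_imp, forall_apply_eq_imp_iff₂]
    intro p hp
    have hp40 : ‖p‖ ≤ 40 := by simpa using hF p hp
    rw [dist_eq_norm, add_sub_cancel_left, norm_smul, Real.norm_of_nonneg hr.le]
    nlinarith
  · intro x hx
    have hx' : r⁻¹ • (x - a) ∈ closedBall (0 : E) 40 := by
      rw [mem_closedBall_zero_iff, norm_smul, norm_inv, Real.norm_of_nonneg hr.le,
        inv_mul_le_iff₀ hr, ← dist_eq_norm]
      linarith [mem_closedBall.mp hx]
    obtain ⟨p, hpF, hxp⟩ := Set.mem_iUnion₂.mp (hcov hx')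
    refine Set.mem_biUnion (Finset.mem_image_of_mem _ hpF) ?_
    have hscale : x - (a + r • p) = r • (r⁻¹ • (x - a) - p) := by
      rw [smul_sub, smul_inv_smul₀ hr.ne']
      abel
    rw [mem_ball, dist_eq_norm, hscale, norm_smul, Real.norm_of_nonneg hr.le, ← dist_eq_norm]
    simpa using mul_lt_mul_of_pos_left (mem_ball.mp hxp) hr

namespace HasBallCovering

variable {X : Type*} [PseudoMetricSpace X] [MeasurableSpace X] {N : ℕ}

theorem exists_le_mul_measure_ball (hX : HasBallCovering X N) (μ : Measure X) {t : ℝ≥0∞}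
    {a : X} {r : ℝ} (hr : 0 < r) (ht : t ≤ μ (closedBall a (40 * r))) :
    ∃ p, dist p a ≤ 40 * r ∧ t ≤ N * μ (ball p r) := by
  obtain ⟨F, hFN, hFa, hcov⟩ := hX a r hr
  have hsum : t ≤ ∑ p ∈ F, μ (ball p r) :=
    ht.trans ((measure_mono hcov).trans (measure_biUnion_finset_le F _))
  rcases F.eq_empty_or_nonempty with rfl | hF
  · have ht0 : t = 0 := by simpa using hsum
    exact ⟨a, by simp [hr.le], by simp [ht0]⟩
  obtain ⟨p, hpF, hpmax⟩ := F.exists_max_image (fun p => μ (ball p r)) hF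
  refine ⟨p, hFa p hpF, hsum.trans ?_⟩
  calc ∑ q ∈ F, μ (ball q r) ≤ F.card • μ (ball p r) := F.sum_le_card_nsmul _ _ hpmax
    _ ≤ N * μ (ball p r) := by rw [nsmul_eq_mul]; gcongr

theorem measure_closedBall_le_mul (hX : HasBallCovering X N) (μ : Measure X) {t : ℝ≥0∞}
    {a : X} {r : ℝ} (hr : 0 < r) (ht : ∀ p, dist p a ≤ 40 * r → μ (ball p r) ≤ t) :
    μ (closedBall a (40 * r)) ≤ N * t := by
  obtain ⟨F, hFN, hFa, hcov⟩ := hX a r hr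
  calc μ (closedBall a (40 * r)) ≤ ∑ p ∈ F, μ (ball p r) :=
        (measure_mono hcov).trans (measure_biUnion_finset_le F _)
    _ ≤ F.card • t := F.sum_le_card_nsmul _ _ fun p hp => ht p (hFa p hp)
    _ ≤ N * t := by rw [nsmul_eq_mul]; gcongr

end HasBallCovering

theorem exists_forall_mem_ball_half_le {X : Type*} [PseudoMetricSpace X] [CompleteSpace X]
    [Nonempty X] {f : X → ℝ} (hf : ∀ y, ∃ δ > 0, ∀ᶠ z in 𝓝 y, δ ≤ f z) {C : ℝ} (hC : 0 ≤ C) :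
    ∃ y, ∀ z ∈ ball y (C * f y), f y / 2 ≤ f z := by
  -- Otherwise jumping, again and again, to a nearby point where `f` halves gives a Cauchy
  -- sequence along which `f → 0`, contradicting the lower bound near its limit.
  by_contra! h
  choose g hg_mem hg_lt using h
  obtain ⟨x₀⟩ := ‹Nonempty X›
  set u : ℕ → X := fun k => g^[k] x₀
  have hu_succ (k : ℕ) : u (k + 1) = g (u k) := Function.iterate_succ_apply' g k x₀
  have hfu (k : ℕ) : f (u k) ≤ f x₀ * (1 / 2) ^ k := by
    induction k with
    | zero => simp [u]
    | succ k ih =>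
      rw [hu_succ, pow_succ]
      linarith [hg_lt (u k)]
  have hdist (k : ℕ) : dist (u k) (u (k + 1)) ≤ C * f x₀ * (1 / 2) ^ k := by
    rw [hu_succ, dist_comm, mul_assoc]
    exact (mem_ball.mp (hg_mem (u k))).le.trans (mul_le_mul_of_nonneg_left (hfu k) hC)
  obtain ⟨y, hy⟩ := cauchySeq_tendsto_of_complete
    (cauchySeq_of_le_geometric (1 / 2) (C * f x₀) (by norm_num) hdist)
  obtain ⟨δ, hδ, hfy⟩ := hf y
  have hsmall : Tendsto (fun k : ℕ => f x₀ * (1 / 2) ^ k) atTop (𝓝 0) := by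
    simpa using (tendsto_pow_atTop_nhds_zero_of_lt_one (by norm_num : (0 : ℝ) ≤ 1 / 2)
      (by norm_num)).const_mul (f x₀)
  obtain ⟨k, hk_near, hk_small⟩ :=
    ((hy.eventually hfy).and (hsmall.eventually_lt_const hδ)).exists
  linarith [hfu k]

section CriticalRadius

variable {X : Type*} [PseudoMetricSpace X] [MeasurableSpace X] {μ : Measure X} {t : ℝ≥0∞}
  {y : X} {r : ℝ}

noncomputable def criticalRadius (μ : Measure X) (t : ℝ≥0∞) (y : X) : ℝ :=
  sInf {r : ℝ | t ≤ μ (ball y r)}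

theorem bddBelow_setOf_le_measure_ball (ht0 : t ≠ 0) (y : X) :
    BddBelow {r : ℝ | t ≤ μ (ball y r)} := by
  refine ⟨0, fun r hr => ?_⟩
  by_contra! hneg
  simp [ball_eq_empty.mpr hneg.le, ht0] at hr

theorem nonempty_setOf_le_measure_ball (hμ : μ Set.univ = ∞) (ht : t ≠ ∞) (y : X) :
    {r : ℝ | t ≤ μ (ball y r)}.Nonempty := by
  have hlim : Tendsto (fun k : ℕ => μ (ball y k)) atTop (𝓝 ∞) := by
    simpa [Function.comp_def, iUnion_ball_nat, hμ] using
      tendsto_measure_iUnion_atTop (μ := μ) fun k l hkl => ball_subset_ball (Nat.cast_le.mpr hkl)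
  obtain ⟨k, hk⟩ := (hlim.eventually_const_lt ht.lt_top).exists
  exact ⟨k, hk.le⟩

theorem criticalRadius_le (ht0 : t ≠ 0) (h : t ≤ μ (ball y r)) : criticalRadius μ t y ≤ r :=
  csInf_le (bddBelow_setOf_le_measure_ball ht0 y) h

theorem measure_ball_lt_of_lt_criticalRadius (ht0 : t ≠ 0) (h : r < criticalRadius μ t y) :
    μ (ball y r) < t :=
  lt_of_not_ge fun h' => h.not_ge (criticalRadius_le ht0 h')

theorem le_measure_ball_of_criticalRadius_lt (hμ : μ Set.univ = ∞) (ht : t ≠ ∞) (ht0 : t ≠ 0)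
    (h : criticalRadius μ t y < r) : t ≤ μ (ball y r) := by
  obtain ⟨s, hs, hsr⟩ := (csInf_lt_iff (bddBelow_setOf_le_measure_ball ht0 y)
    (nonempty_setOf_le_measure_ball hμ ht y)).mp h
  exact hs.trans (measure_mono (ball_subset_ball hsr.le))

theorem le_criticalRadius (hμ : μ Set.univ = ∞) (ht : t ≠ ∞) (h : μ (ball y r) < t) :
    r ≤ criticalRadius μ t y :=
  le_csInf (nonempty_setOf_le_measure_ball hμ ht y) fun _ hs => le_of_not_gt fun hsr =>
    h.not_ge (hs.trans (measure_mono (ball_subset_ball hsr.le)))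

end CriticalRadius

theorem exists_pos_eventually_le_criticalRadius {X : Type*} [MetricSpace X] [MeasurableSpace X]
    [OpensMeasurableSpace X] {μ : Measure X} {t : ℝ≥0∞} (hμ : μ Set.univ = ∞) (ht : t ≠ ∞)
    (ht0 : t ≠ 0) {y : X} (hy : μ {y} = 0) (hfin : ∃ R > 0, μ (ball y R) ≠ ∞) :
    ∃ δ > 0, ∀ᶠ z in 𝓝 y, δ ≤ criticalRadius μ t z := by
  have hlim := tendsto_measure_thickening_of_isClosed (μ := μ)
    (by simpa only [thickening_singleton] using hfin) (isClosed_singleton (x := y))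
  simp only [thickening_singleton, hy] at hlim
  obtain ⟨ε, hεt, hε⟩ :=
    ((hlim.eventually_lt_const (pos_iff_ne_zero.mpr ht0)).and self_mem_nhdsWithin).exists
  refine ⟨ε / 2, half_pos hε, ?_⟩
  filter_upwards [ball_mem_nhds y (half_pos hε)] with z hz
  refine le_criticalRadius hμ ht ((measure_mono (ball_subset_ball' ?_)).trans_lt hεt)
  linarith [mem_ball.mp hz]

theorem HasBallCovering.exists_ball_le_measure_ball_two_mul_le {X : Type*} [MetricSpace X]
    [CompleteSpace X] [MeasurableSpace X] [OpensMeasurableSpace X] {N : ℕ}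
    (hX : HasBallCovering X N) {μ : Measure X} (hatom : ∀ x, μ {x} = 0)
    (hμ : μ Set.univ = ∞) (hfin : ∀ a r, μ (ball a r) < ∞) {t : ℝ≥0∞} (ht : t ≠ ∞)
    (ht0 : t ≠ 0) :
    ∃ a r, 0 < r ∧ t ≤ μ (ball a (2 * r)) ∧ μ (ball a (2 * r)) ≤ N ^ 2 * μ (ball a r) := by
  set ρ := criticalRadius μ t
  have hρ (y : X) : ∃ δ > 0, ∀ᶠ z in 𝓝 y, δ ≤ ρ z :=
    exists_pos_eventually_le_criticalRadius hμ ht ht0 (hatom y) ⟨1, one_pos, (hfin y 1).ne⟩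
  have : Nonempty X := ⟨(nonempty_of_measure_ne_zero (μ := μ) (s := Set.univ) (by simp [hμ])).some⟩
  obtain ⟨y, hy⟩ := exists_forall_mem_ball_half_le hρ (by norm_num : (0 : ℝ) ≤ 20)
  have hρy : 0 < ρ y := by
    obtain ⟨δ, hδ, hev⟩ := hρ y
    exact hδ.trans_le hev.self_of_nhds
  have hty : t ≤ μ (ball y (2 * ρ y)) := le_measure_ball_of_criticalRadius_lt hμ ht ht0 (by linarith)
  obtain ⟨z, hzy, hz⟩ := hX.exists_le_mul_measure_ball μ (r := ρ y / 10) (by positivity)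
    (hty.trans (measure_mono (ball_subset_closedBall.trans
      (closedBall_subset_closedBall (by linarith)))))
  have hρz_ge : ρ y / 2 ≤ ρ z := hy z (mem_ball.mpr (by linarith))
  have hρz_le : ρ z ≤ 6 * ρ y := criticalRadius_le ht0 (hty.trans (measure_mono
    (ball_subset_ball' (by rw [dist_comm]; linarith))))
  refine ⟨z, ρ z, by linarith, le_measure_ball_of_criticalRadius_lt hμ ht ht0 (by linarith), ?_⟩
  have hupper : μ (ball z (2 * ρ z)) ≤ N * t := by
    refine (measure_mono (ball_subset_closedBall.trans (closedBall_subset_closedBall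
      (by linarith : 2 * ρ z ≤ 40 * (3 * ρ y / 10))))).trans
      (hX.measure_closedBall_le_mul μ (by positivity) fun p hp => ?_)
    have hρp : ρ y / 2 ≤ ρ p := hy p (mem_ball.mpr (by linarith [dist_triangle p z y]))
    exact (measure_ball_lt_of_lt_criticalRadius ht0 (by linarith)).le
  calc μ (ball z (2 * ρ z)) ≤ N * t := hupper
    _ ≤ N * (N * μ (ball z (ρ z))) := by
        gcongr
        exact hz.trans (by gcongr; linarith)
    _ = N ^ 2 * μ (ball z (ρ z)) := by ring

/-- Rickman's Hunting Lemma. There is a constant `D = D(n) > 1` such that for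
every atomless Borel measure `μ` on `ℝⁿ` with `μ(ℝⁿ) = ∞` which is finite on balls, and every
positive integer `j`, there is an open ball `𝔹 = B(a,r)` with `j ≤ μ(2𝔹) ≤ D μ(𝔹)`. -/
theorem rickman_hunting_lemma (n : ℕ) :
    ∃ D : ℝ≥0∞, 1 < D ∧ D < ⊤ ∧
      ∀ μ : Measure (EuclideanSpace ℝ (Fin n)),
        (∀ x, μ {x} = 0) →
        μ Set.univ = ⊤ →
        (∀ (a : EuclideanSpace ℝ (Fin n)) (r : ℝ), μ (ball a r) < ⊤) →
        ∀ j : ℕ, 0 < j →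
          ∃ (a : EuclideanSpace ℝ (Fin n)) (r : ℝ), 0 < r ∧
            (j : ℝ≥0∞) ≤ μ (ball a (2 * r)) ∧
            μ (ball a (2 * r)) ≤ D * μ (ball a r) := by
  obtain ⟨N, hN⟩ := exists_hasBallCovering (EuclideanSpace ℝ (Fin n))
  refine ⟨N ^ 2 + 2, ENNReal.one_lt_two.trans_le le_add_self, by simp [ENNReal.add_lt_top],
    fun μ hatom hμ hfin j hj => ?_⟩
  obtain ⟨a, r, hr, hja, hdoubling⟩ := hN.exists_ball_le_measure_ball_two_mul_le hatom hμ hfin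
    (ENNReal.natCast_ne_top j) (by exact_mod_cast hj.ne')
  exact ⟨a, r, hr, hja, hdoubling.trans (by gcongr; exact le_self_add)⟩
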